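/- For b ≥ 0 and x > 1, the relative error of the shifted Gaussian tail satisfies |(1 − Φ(x + b))/(1 − Φ(x)) − 1| ≤ b·φ(x)/(1 − Φ(x)) ≤ bx/(1 − 1/x²), where Φ and φ are the standard normal CDF and density. -/

import Mathlib

open MeasureTheory Real Set Filter

/-- The standard normal density. -/
noncomputable def stdNormalPDF (x : ℝ) : ℝ :=
  (Real.sqrt (2 * Real.pi))⁻¹ * Real.exp (-x ^ 2 / 2)

/-- The standard normal cumulative distribution function. -/
noncomputable def stdNormalCDF (x : ℝ) : ℝ :=
  ∫ t in Set.Iic x, stdNormalPDF t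

lemma pdf_pos (x : ℝ) : 0 < stdNormalPDF x := by
  unfold stdNormalPDF
  positivity

lemma pdf_continuous : Continuous stdNormalPDF := by
  unfold stdNormalPDF
  fun_prop

lemma pdf_integrable : Integrable stdNormalPDF := by
  have h : Integrable (fun x : ℝ => Real.exp (-(1/2 : ℝ) * x ^ 2)) :=
    integrable_exp_neg_mul_sq (by norm_num)
  have := h.const_mul (Real.sqrt (2 * Real.pi))⁻¹
  refine this.congr (Filter.Eventually.of_forall fun x => ?_)
  unfold stdNormalPDF
  ring_nf

lemma integral_pdf : ∫ x, stdNormalPDF x = 1 := by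
  unfold stdNormalPDF
  rw [MeasureTheory.integral_const_mul]
  have : ∀ x : ℝ, Real.exp (-x ^ 2 / 2) = Real.exp (-(1/2 : ℝ) * x ^ 2) := by
    intro x; ring_nf
  simp_rw [this]
  rw [integral_gaussian, show Real.pi / (1/2 : ℝ) = 2 * Real.pi by ring,
    inv_mul_cancel₀ (by positivity)]

lemma pdf_anti {s t : ℝ} (hs : 0 ≤ s) (hst : s ≤ t) : stdNormalPDF t ≤ stdNormalPDF s := by
  unfold stdNormalPDF
  gcongr

lemma tail_eq (x : ℝ) : 1 - stdNormalCDF x = ∫ t in Set.Ioi x, stdNormalPDF t := by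
  have h := intervalIntegral.integral_Iic_add_Ioi (b := x)
    pdf_integrable.integrableOn pdf_integrable.integrableOn
  rw [integral_pdf] at h
  unfold stdNormalCDF
  linarith

lemma tail_pos (x : ℝ) : 0 < 1 - stdNormalCDF x := by
  rw [tail_eq]
  have hsub : Set.Ioc x (x + 1) ⊆ Set.Ioi x := fun t ht => ht.1
  have h1 : (0 : ℝ) < ∫ t in Set.Ioc x (x + 1), stdNormalPDF t := by
    have hmin : ∃ c ∈ Set.Icc x (x+1), ∀ t ∈ Set.Icc x (x+1), stdNormalPDF c ≤ stdNormalPDF t := by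
      obtain ⟨c, hc, hmin⟩ := IsCompact.exists_isMinOn (isCompact_Icc (a := x) (b := x+1))
        (Set.nonempty_Icc.2 (by linarith)) pdf_continuous.continuousOn
      exact ⟨c, hc, fun t ht => hmin ht⟩
    obtain ⟨c, _, hc⟩ := hmin
    have hvol : (volume (Set.Ioc x (x+1))).toReal = 1 := by
      rw [Real.volume_Ioc]; norm_num
    calc (0:ℝ) < stdNormalPDF c := pdf_pos c
      _ = ∫ _ in Set.Ioc x (x+1), stdNormalPDF c := by
            rw [setIntegral_const, measureReal_def, hvol, one_smul]
      _ ≤ ∫ t in Set.Ioc x (x+1), stdNormalPDF t := by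
            apply setIntegral_mono_on (integrable_const _) (pdf_integrable.integrableOn)
              measurableSet_Ioc
            intro t ht
            exact hc t ⟨le_of_lt ht.1, ht.2⟩
  have h2 : (∫ t in Set.Ioc x (x+1), stdNormalPDF t) ≤ ∫ t in Set.Ioi x, stdNormalPDF t := by
    apply setIntegral_mono_set pdf_integrable.integrableOn
      (Filter.Eventually.of_forall fun t => (pdf_pos t).le)
    exact Filter.Eventually.of_forall hsub
  linarith

lemma cdf_diff_le {b x : ℝ} (hb : 0 ≤ b) (hx : 0 ≤ x) :
    stdNormalCDF (x + b) - stdNormalCDF x ≤ b * stdNormalPDF x := by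
  have hdiff : stdNormalCDF (x + b) - stdNormalCDF x = ∫ t in Set.Ioc x (x + b), stdNormalPDF t := by
    unfold stdNormalCDF
    rw [intervalIntegral.integral_Iic_sub_Iic pdf_integrable.integrableOn
      pdf_integrable.integrableOn]
    rw [intervalIntegral.integral_of_le (by linarith)]
  rw [hdiff]
  calc (∫ t in Set.Ioc x (x + b), stdNormalPDF t)
      ≤ ∫ _ in Set.Ioc x (x + b), stdNormalPDF x := by
        apply setIntegral_mono_on pdf_integrable.integrableOn (integrable_const _)
          measurableSet_Ioc
        intro t ht
        exact pdf_anti hx ht.1.le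
    _ = b * stdNormalPDF x := by
        rw [setIntegral_const, measureReal_def, Real.volume_Ioc]
        rw [show x + b - x = b by ring, ENNReal.toReal_ofReal hb, smul_eq_mul]

lemma mills {x : ℝ} (hx : 1 < x) :
    stdNormalPDF x / x ≤ (1 + 1 / x ^ 2) * (1 - stdNormalCDF x) := by
  have hx0 : 0 < x := by linarith
  set f : ℝ → ℝ := fun t => -(stdNormalPDF t / t) with hf
  set f' : ℝ → ℝ := fun t => stdNormalPDF t * (1 + 1 / t ^ 2) with hf'
  have hderiv : ∀ t ∈ Set.Ioi x, HasDerivAt f (f' t) t := by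
    intro t ht
    have ht0 : (0:ℝ) < t := lt_trans hx0 ht
    have h1 : HasDerivAt (fun t : ℝ => Real.exp (-t ^ 2 / 2)) (-t * Real.exp (-t ^ 2 / 2)) t := by
      have h0 : HasDerivAt (fun t : ℝ => -t ^ 2 / 2) (-t) t := by
        have h := ((hasDerivAt_pow 2 t).neg.div_const 2)
        refine h.congr_deriv ?_
        push_cast
        ring
      simpa [mul_comm] using h0.exp
    have h2 : HasDerivAt stdNormalPDF
        ((Real.sqrt (2 * Real.pi))⁻¹ * (-t * Real.exp (-t ^ 2 / 2))) t := by
      unfold stdNormalPDF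
      exact h1.const_mul _
    have h3 : HasDerivAt (fun t => stdNormalPDF t / t)
        (((Real.sqrt (2 * Real.pi))⁻¹ * (-t * Real.exp (-t ^ 2 / 2)) * t - stdNormalPDF t * 1)
          / t ^ 2) t := h2.div (hasDerivAt_id t) (ne_of_gt ht0)
    have := h3.neg
    refine this.congr_deriv ?_
    simp only [hf', stdNormalPDF]
    have hs : Real.sqrt (2 * Real.pi) ≠ 0 := by positivity
    field_simp
    ring
  have hcont : ContinuousWithinAt f (Set.Ici x) x := by
    apply ContinuousAt.continuousWithinAt
    exact (pdf_continuous.continuousAt.div continuous_id.continuousAt (ne_of_gt hx0)).neg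
  have hint : IntegrableOn f' (Set.Ioi x) := by
    have hb : Integrable (fun t => (1 + 1 / x ^ 2) * stdNormalPDF t) :=
      pdf_integrable.const_mul _
    apply Integrable.mono' hb.integrableOn
    · apply ((pdf_continuous.continuousOn (s := Set.Ioi x)).mul ?_).aestronglyMeasurable
        measurableSet_Ioi
      apply ContinuousOn.add continuousOn_const
      apply ContinuousOn.div continuousOn_const (by fun_prop)
      intro t ht
      have : (0:ℝ) < t := lt_trans hx0 ht
      positivity
    · refine (ae_restrict_iff' measurableSet_Ioi).2 (Filter.Eventually.of_forall fun t ht => ?_)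
      have ht0 : (0:ℝ) < t := lt_trans hx0 ht
      have h1 : (0:ℝ) < 1 + 1 / t ^ 2 := by positivity
      have hft : 0 < f' t := mul_pos (pdf_pos t) (by positivity)
      rw [Real.norm_eq_abs, abs_of_pos hft]
      have : 1 / t ^ 2 ≤ 1 / x ^ 2 := by
        apply one_div_le_one_div_of_le (by positivity)
        nlinarith [le_of_lt (Set.mem_Ioi.mp ht)]
      have := pdf_pos t
      simp only [hf']
      nlinarith
  have htend : Tendsto f atTop (nhds 0) := by
    have h1 : Tendsto stdNormalPDF atTop (nhds 0) := by
      unfold stdNormalPDF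
      rw [show (0:ℝ) = (Real.sqrt (2 * Real.pi))⁻¹ * 0 by ring]
      apply Tendsto.const_mul
      apply Real.tendsto_exp_atBot.comp
      apply Filter.Tendsto.atBot_div_const (by norm_num : (0:ℝ) < 2)
      apply tendsto_neg_atBot_iff.2
      exact tendsto_pow_atTop (by norm_num)
    have h2 : Tendsto (fun t : ℝ => t⁻¹) atTop (nhds 0) := tendsto_inv_atTop_zero
    have := (h1.mul h2).neg
    simp only [zero_mul, neg_zero] at this
    refine this.congr fun t => ?_
    simp [hf, div_eq_mul_inv]
  have key : ∫ t in Set.Ioi x, f' t = stdNormalPDF x / x := by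
    rw [MeasureTheory.integral_Ioi_of_hasDerivAt_of_tendsto hcont hderiv hint htend]
    simp [hf]
  have hbound : ∫ t in Set.Ioi x, f' t ≤ ∫ t in Set.Ioi x, (1 + 1 / x ^ 2) * stdNormalPDF t := by
    apply setIntegral_mono_on hint (pdf_integrable.const_mul _).integrableOn measurableSet_Ioi
    intro t ht
    have ht0 : (0:ℝ) < t := lt_trans hx0 ht
    have h2 : 1 / t ^ 2 ≤ 1 / x ^ 2 := by
      apply one_div_le_one_div_of_le (by positivity)
      nlinarith [le_of_lt (Set.mem_Ioi.mp ht)]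
    have := pdf_pos t
    simp only [hf']
    nlinarith
  rw [key] at hbound
  rw [MeasureTheory.integral_const_mul] at hbound
  rw [tail_eq]
  exact hbound

/-- For `b ≥ 0` and `x > 1`, the relative error of the shifted Gaussian tail
satisfies `|(1 − Φ(x+b))/(1 − Φ(x)) − 1| ≤ b·φ(x)/(1 − Φ(x)) ≤ bx/(1 − 1/x²)`. -/
theorem shifted_gaussian_tail_relative_error
    (b x : ℝ) (hb : 0 ≤ b) (hx : 1 < x) :
    |(1 - stdNormalCDF (x + b)) / (1 - stdNormalCDF x) - 1|
        ≤ b * stdNormalPDF x / (1 - stdNormalCDF x)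
      ∧ b * stdNormalPDF x / (1 - stdNormalCDF x) ≤ b * x / (1 - 1 / x ^ 2) := by
  have hx0 : (0:ℝ) < x := by linarith
  have hT := tail_pos x
  have hTb := tail_pos (x + b)
  constructor
  · have hdle : stdNormalCDF x ≤ stdNormalCDF (x + b) := by
      have := cdf_diff_le hb hx0.le
      have hdiff : stdNormalCDF (x + b) - stdNormalCDF x
          = ∫ t in Set.Ioc x (x + b), stdNormalPDF t := by
        unfold stdNormalCDF
        rw [intervalIntegral.integral_Iic_sub_Iic pdf_integrable.integrableOn
          pdf_integrable.integrableOn]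
        rw [intervalIntegral.integral_of_le (by linarith)]
      have hnn : 0 ≤ ∫ t in Set.Ioc x (x + b), stdNormalPDF t :=
        setIntegral_nonneg measurableSet_Ioc fun t _ => (pdf_pos t).le
      linarith
    have heq : (1 - stdNormalCDF (x + b)) / (1 - stdNormalCDF x) - 1
        = -((stdNormalCDF (x + b) - stdNormalCDF x) / (1 - stdNormalCDF x)) := by
      field_simp
      ring
    rw [heq, abs_neg, abs_of_nonneg (div_nonneg (by linarith) hT.le)]
    gcongr
    exact cdf_diff_le hb hx0.le
  · have hmills := mills hx
    have hx2 : (0:ℝ) < 1 - 1 / x ^ 2 := by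
      have : 1 / x ^ 2 < 1 := by
        rw [div_lt_one (by positivity)]
        nlinarith
      linarith
    -- φ x ≤ x * (1 + 1/x²) * (1 - Φ x) ≤ x / (1 - 1/x²) * (1 - Φ x)
    have h1 : stdNormalPDF x ≤ x * (1 + 1 / x ^ 2) * (1 - stdNormalCDF x) := by
      rw [div_le_iff₀ hx0] at hmills
      nlinarith [hmills]
    have h2 : x * (1 + 1 / x ^ 2) ≤ x / (1 - 1 / x ^ 2) := by
      rw [le_div_iff₀ hx2]
      have : (1 + 1 / x ^ 2) * (1 - 1 / x ^ 2) ≤ 1 := by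
        have h3 : (0:ℝ) < 1 / x ^ 2 := by positivity
        nlinarith
      nlinarith
    have h3 : stdNormalPDF x ≤ x / (1 - 1 / x ^ 2) * (1 - stdNormalCDF x) := by
      calc stdNormalPDF x ≤ x * (1 + 1 / x ^ 2) * (1 - stdNormalCDF x) := h1
        _ ≤ x / (1 - 1 / x ^ 2) * (1 - stdNormalCDF x) := by
            apply mul_le_mul_of_nonneg_right h2 hT.le
    rw [div_le_div_iff₀ hT hx2]
    have := mul_le_mul_of_nonneg_left h3 hb
    calc b * stdNormalPDF x * (1 - 1 / x ^ 2)
        ≤ b * (x / (1 - 1 / x ^ 2) * (1 - stdNormalCDF x)) * (1 - 1 / x ^ 2) := by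
          apply mul_le_mul_of_nonneg_right this hx2.le
      _ = b * x * (1 - stdNormalCDF x) := by
          have hdm : x / (1 - 1 / x ^ 2) * (1 - 1 / x ^ 2) = x :=
            div_mul_cancel₀ _ (ne_of_gt hx2)
          linear_combination (b * (1 - stdNormalCDF x)) * hdm
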